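/- arXiv:1407.3709 — 3 statements merged into one kernel-verified Lean document; each statement's English description precedes it below -/
import Mathlib

section
/- Let k be a nonnegative integer, 0 < α < 1, and m a nonnegative integer. The map τ_m : C^{k,α}_{0^m} → C^{k,α}_ℂ defined by τ_m((1-ζ)^m v) = v is an isometric Banach space isomorphism from C^{k,α}_{0^m} onto the closed subspace R_m = { v ∈ C^{k,α}_ℂ : v(ζ) = (-1)^m ζ^{-m} conj(v(ζ)) for all ζ ∈ bΔ } of C^{k,α}_ℂ. -/
noncomputable section

open Complex Metric Set Finset
open scoped Classical

/-- The closed unit disc in `ℂ`, as a type. -/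
abbrev ClosedDisc : Type := (Metric.closedBall (0 : ℂ) 1 : Set ℂ)

/-- The inclusion of the unit circle `bΔ` into the closed unit disc. -/
def bd (z : Circle) : ClosedDisc :=
  ⟨(z : ℂ), by simp [Metric.mem_closedBall, dist_zero_right, Circle.norm_coe]⟩

/-- Negation on the circle. -/
def negCircle (z : Circle) : Circle :=
  ⟨-(z : ℂ), mem_sphere_zero_iff_norm.2 (by simp [Circle.norm_coe])⟩

/-- The angular lift of a function on the unit circle. -/
def liftC (f : Circle → ℂ) : ℝ → ℂ := fun θ => f (Circle.exp θ)

/-- `f` belongs to `C^{k,α}_ℂ(bΔ)`: its angular lift is `C^k` and the `k`-th derivative of the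
lift is `α`-Hölder. -/
def IsCkC (k : ℕ) (α : ℝ) (f : Circle → ℂ) : Prop :=
  ContDiff ℝ (k : ℕ∞) (liftC f) ∧
    ∃ C : NNReal, HolderWith C α.toNNReal (iteratedDeriv k (liftC f))

/-- `f` takes real values. -/
def IsRealValued (f : Circle → ℂ) : Prop := ∀ z, (f z).im = 0

/-- The space `C^{k,α} = C^{k,α}(bΔ, ℝ)` of real-valued Hölder functions. -/
def CkR (k : ℕ) (α : ℝ) : Set (Circle → ℂ) := {f | IsCkC k α f ∧ IsRealValued f}

/-- The space `C^{k,α}_ℂ`. -/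
def CkC (k : ℕ) (α : ℝ) : Set (Circle → ℂ) := {f | IsCkC k α f}

/-- The odd real-valued functions of class `C^{k,α}`. -/
def CkOdd (k : ℕ) (α : ℝ) : Set (Circle → ℂ) :=
  {f | IsCkC k α f ∧ IsRealValued f ∧ ∀ z : Circle, f (negCircle z) = -f z}

/-- The even real-valued functions of class `C^{k,α}`. -/
def CkEven (k : ℕ) (α : ℝ) : Set (Circle → ℂ) :=
  {f | IsCkC k α f ∧ IsRealValued f ∧ ∀ z : Circle, f (negCircle z) = f z}

/-- The subspace `R_m = {v ∈ C^{k,α}_ℂ | v(ζ) = (-1)^m ζ^{-m} conj (v ζ)}`. -/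
def Rm (k : ℕ) (α : ℝ) (m : ℤ) : Set (Circle → ℂ) :=
  {v | IsCkC k α v ∧
    ∀ z : Circle, v z = (-1 : ℂ) ^ m * (z : ℂ) ^ (-m) * (starRingEnd ℂ) (v z)}

/-- The space `C^{k,α}_{0^m}` of real-valued functions of the form `(1-ζ)^m v`,
`v ∈ C^{k,α}_ℂ`. -/
def C0m (k : ℕ) (α : ℝ) (m : ℕ) : Set (Circle → ℂ) :=
  {φ | IsRealValued φ ∧ ∃ v, IsCkC k α v ∧ ∀ z : Circle, φ z = (1 - (z : ℂ)) ^ m * v z}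

/-- Sup norm of the lift. -/
def supN (g : ℝ → ℂ) : ℝ := ⨆ θ : ℝ, ‖g θ‖

/-- Hölder seminorm (computed through the angular lift). -/
def holderSem (α : ℝ) (g : ℝ → ℂ) : ℝ :=
  ⨆ p : ℝ × ℝ, if (Circle.exp p.1 : ℂ) = Circle.exp p.2 then 0
    else ‖g p.1 - g p.2‖ / ‖(Circle.exp p.1 : ℂ) - (Circle.exp p.2 : ℂ)‖ ^ α

/-- The `C^{k,α}` norm. -/
def normCkR (k : ℕ) (α : ℝ) (f : Circle → ℂ) : ℝ :=
  (∑ j ∈ Finset.range (k + 1), supN (iteratedDeriv j (liftC f))) +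
    holderSem α (iteratedDeriv k (liftC f))

/-- The `C^{k,α}_ℂ` norm `‖Re v‖ + ‖Im v‖`. -/
def normCkC (k : ℕ) (α : ℝ) (f : Circle → ℂ) : ℝ :=
  normCkR k α (fun z => ((f z).re : ℂ)) + normCkR k α (fun z => ((f z).im : ℂ))

/-- The norm of `C^{k,α}_{0^m}`: `‖(1-ζ)^m v‖ = ‖v‖_{C^{k,α}_ℂ}`. -/
def normC0m (k : ℕ) (α : ℝ) (m : ℕ) (φ : Circle → ℂ) : ℝ :=
  sInf {r | ∃ v, IsCkC k α v ∧ (∀ z : Circle, φ z = (1 - (z : ℂ)) ^ m * v z) ∧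
    r = normCkC k α v}

/-- Extension of a function on the closed disc to the plane (by junk value `0`). -/
def extD (f : ClosedDisc → ℂ) : ℂ → ℂ :=
  fun z => if h : z ∈ Metric.closedBall (0 : ℂ) 1 then f ⟨z, h⟩ else 0

/-- Boundary trace of a function on the closed disc. -/
def bTrace (f : ClosedDisc → ℂ) : Circle → ℂ := fun z => f (bd z)

/-- `f ∈ A^{k,α}`: `f` is continuous on the closed disc, holomorphic on the open disc, and its
boundary trace is of class `C^{k,α}_ℂ`. -/
def IsA (k : ℕ) (α : ℝ) (f : ClosedDisc → ℂ) : Prop :=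
  ContinuousOn (extD f) (Metric.closedBall 0 1) ∧
    DifferentiableOn ℂ (extD f) (Metric.ball 0 1) ∧ IsCkC k α (bTrace f)

/-- The space `(1-ζ)^m A^{k,α}`. -/
def mA (k : ℕ) (α : ℝ) (m : ℕ) : Set (ClosedDisc → ℂ) :=
  {φ | ∃ f, IsA k α f ∧ ∀ z : ClosedDisc, φ z = (1 - (z : ℂ)) ^ m * f z}

/-- The norm of `A^{k,α}` (the `C^{k,α}_ℂ` norm of the boundary trace). -/
def normA (k : ℕ) (α : ℝ) (f : ClosedDisc → ℂ) : ℝ := normCkC k α (bTrace f)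

/-- The norm of `(1-ζ)^m A^{k,α}`: `‖(1-ζ)^m f‖ = ‖f‖`. -/
def normmA (k : ℕ) (α : ℝ) (m : ℕ) (φ : ClosedDisc → ℂ) : ℝ :=
  sInf {r | ∃ f, IsA k α f ∧ (∀ z : ClosedDisc, φ z = (1 - (z : ℂ)) ^ m * f z) ∧
    r = normA k α f}

/-- A subset `K` of a real vector space (in practice, a linear subspace) has real dimension `d`:
there are `d` linearly independent elements of `K` spanning `K`. -/
def HasRealDim {X : Type*} [AddCommGroup X] [Module ℝ X] (K : Set X) (d : ℕ) : Prop :=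
  ∃ b : Fin d → X, (∀ i, b i ∈ K) ∧ LinearIndependent ℝ b ∧
    ∀ f ∈ K, ∃ c : Fin d → ℝ, f = ∑ i, c i • b i

/-!
On the unit circle `conj (1 - ζ) = -ζ⁻¹ (1 - ζ)`, so
`conj ((1-ζ)^m v) = (1-ζ)^m · (-1)^m ζ^{-m} conj v`. Thus `(1-ζ)^m v` is real iff `v` and
`(-1)^m ζ^{-m} conj v` agree off `ζ = 1`, i.e. everywhere, by continuity. The same density
argument shows that `v` is determined by `(1-ζ)^m v`, so `τ_m` is well defined and linear; it is
isometric because the norm of `C^{k,α}_{0^m}` is an infimum over a single value.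
-/

lemma dense_setOf_circleExp_ne_one : Dense {θ : ℝ | Circle.exp θ ≠ 1} := by
  have hcount : {θ : ℝ | Circle.exp θ = 1}.Countable := by
    refine (Set.countable_range fun n : ℤ => (n : ℝ) * (2 * Real.pi)).mono fun θ hθ => ?_
    obtain ⟨n, hn⟩ := Circle.exp_eq_one.mp hθ
    exact ⟨n, hn.symm⟩
  exact hcount.dense_compl ℝ

lemma eq_of_continuous_liftC_of_eq_of_ne_one {v w : Circle → ℂ} (hv : Continuous (liftC v))
    (hw : Continuous (liftC w)) (h : ∀ z : Circle, z ≠ 1 → v z = w z) : v = w := by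
  have hlift : liftC v = liftC w :=
    hv.ext_on dense_setOf_circleExp_ne_one hw fun θ hθ => h _ hθ
  funext z
  obtain ⟨θ, rfl⟩ := Circle.exp_surjective z
  exact congrFun hlift θ

lemma eq_of_one_sub_pow_mul_eq (m : ℕ) {v w : Circle → ℂ} (hv : Continuous (liftC v))
    (hw : Continuous (liftC w))
    (h : ∀ z : Circle, (1 - (z : ℂ)) ^ m * v z = (1 - (z : ℂ)) ^ m * w z) : v = w := by
  refine eq_of_continuous_liftC_of_eq_of_ne_one hv hw fun z hz => ?_
  have hz' : 1 - (z : ℂ) ≠ 0 := sub_ne_zero.mpr fun h1 => hz (Circle.coe_eq_one.mp h1.symm)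
  exact mul_left_cancel₀ (pow_ne_zero m hz') (h z)

namespace IsCkC

variable {k : ℕ} {α : ℝ} {v w : Circle → ℂ}

lemma add (hv : IsCkC k α v) (hw : IsCkC k α w) : IsCkC k α (v + w) := by
  have hlift : liftC (v + w) = liftC v + liftC w := rfl
  have hderiv : iteratedDeriv k (liftC (v + w)) =
      iteratedDeriv k (liftC v) + iteratedDeriv k (liftC w) :=
    funext fun _ => hlift ▸ iteratedDeriv_add hv.1.contDiffAt hw.1.contDiffAt
  obtain ⟨C, hC⟩ := hv.2
  obtain ⟨C', hC'⟩ := hw.2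
  exact ⟨hlift ▸ hv.1.add hw.1, C + C', hderiv ▸ hC.add hC'⟩

lemma const_smul (c : ℂ) (hv : IsCkC k α v) : IsCkC k α (c • v) := by
  have hlift : liftC (c • v) = c • liftC v := rfl
  have hderiv : iteratedDeriv k (liftC (c • v)) = c • iteratedDeriv k (liftC v) :=
    funext fun _ => iteratedDeriv_const_smul_field c _
  obtain ⟨C, hC⟩ := hv.2
  exact ⟨hlift ▸ hv.1.const_smul c, C * ‖c‖₊, hderiv ▸ hC.smul c⟩

end IsCkC

def circleReflect (m : ℤ) (v : Circle → ℂ) : Circle → ℂ :=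
  fun z => (-1 : ℂ) ^ m * (z : ℂ) ^ (-m) * (starRingEnd ℂ) (v z)

lemma continuous_liftC_circleReflect (m : ℤ) {v : Circle → ℂ} (hv : Continuous (liftC v)) :
    Continuous (liftC (circleReflect m v)) := by
  have hexp : Continuous fun θ : ℝ => (Circle.exp θ : ℂ) :=
    continuous_subtype_val.comp Circle.exp.continuous
  exact (continuous_const.mul (hexp.zpow₀ _ fun θ => Or.inl (Circle.exp θ).coe_ne_zero)).mul
    (Complex.continuous_conj.comp hv)

lemma conj_one_sub_pow_mul (m : ℕ) (z : Circle) (a : ℂ) :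
    (starRingEnd ℂ) ((1 - (z : ℂ)) ^ m * a) =
      (1 - (z : ℂ)) ^ m *
        ((-1 : ℂ) ^ (m : ℤ) * (z : ℂ) ^ (-(m : ℤ)) * (starRingEnd ℂ) a) := by
  have hz : (z : ℂ) ≠ 0 := z.coe_ne_zero
  have hconj : (starRingEnd ℂ) (1 - (z : ℂ)) = (1 - z) * (-1) * (z : ℂ)⁻¹ := by
    rw [map_sub, map_one, ← Circle.coe_inv_eq_conj, Circle.coe_inv]
    field_simp
    ring
  rw [map_mul, map_pow, hconj, zpow_neg, zpow_natCast, zpow_natCast, mul_pow, mul_pow, inv_pow]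
  ring

lemma isRealValued_one_sub_pow_mul_iff (m : ℕ) {v : Circle → ℂ} (hv : Continuous (liftC v)) :
    IsRealValued (fun z => (1 - (z : ℂ)) ^ m * v z) ↔ v = circleReflect m v := by
  simp only [IsRealValued, ← Complex.conj_eq_iff_im, conj_one_sub_pow_mul]
  refine ⟨fun h => eq_of_one_sub_pow_mul_eq m hv (continuous_liftC_circleReflect m hv)
    fun z => (h z).symm, fun h z => congrArg _ (congrFun h z).symm⟩

def IsCkCCofactor (k : ℕ) (α : ℝ) (m : ℕ) (φ v : Circle → ℂ) : Prop :=
  IsCkC k α v ∧ ∀ z : Circle, φ z = (1 - (z : ℂ)) ^ m * v z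

namespace IsCkCCofactor

variable {k : ℕ} {α : ℝ} {m : ℕ} {φ ψ v w : Circle → ℂ}

lemma unique (hv : IsCkCCofactor k α m φ v) (hw : IsCkCCofactor k α m φ w) : v = w :=
  eq_of_one_sub_pow_mul_eq m hv.1.1.continuous hw.1.1.continuous fun z =>
    (hv.2 z).symm.trans (hw.2 z)

lemma add (hv : IsCkCCofactor k α m φ v) (hw : IsCkCCofactor k α m ψ w) :
    IsCkCCofactor k α m (φ + ψ) (v + w) :=
  ⟨hv.1.add hw.1, fun z => by simp only [Pi.add_apply, hv.2 z, hw.2 z, mul_add]⟩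

lemma const_smul (c : ℂ) (hv : IsCkCCofactor k α m φ v) :
    IsCkCCofactor k α m (c • φ) (c • v) :=
  ⟨hv.1.const_smul c, fun z => by simp only [Pi.smul_apply, smul_eq_mul, hv.2 z]; ring⟩

lemma normC0m_eq (hv : IsCkCCofactor k α m φ v) : normC0m k α m φ = normCkC k α v := by
  have hset : {r | ∃ u, IsCkC k α u ∧ (∀ z : Circle, φ z = (1 - (z : ℂ)) ^ m * u z) ∧
      r = normCkC k α u} = {normCkC k α v} := by
    ext r
    constructor
    · rintro ⟨u, hu, hφu, rfl⟩
      exact congrArg _ (IsCkCCofactor.unique ⟨hu, hφu⟩ hv)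
    · rintro rfl
      exact ⟨v, hv.1, hv.2, rfl⟩
  rw [normC0m, hset, csInf_singleton]

end IsCkCCofactor

/-- `τ_m`: the `v` with `φ = (1-ζ)^m v`, unique by `IsCkCCofactor.unique`; junk `0` outside
`C^{k,α}_{0^m}`. -/
def cofactor (k : ℕ) (α : ℝ) (m : ℕ) (φ : Circle → ℂ) : Circle → ℂ :=
  if h : ∃ v, IsCkCCofactor k α m φ v then h.choose else 0

section Cofactor

variable {k : ℕ} {α : ℝ} {m : ℕ} {φ v : Circle → ℂ}

lemma cofactor_eq (hv : IsCkCCofactor k α m φ v) : cofactor k α m φ = v := by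
  have h : ∃ v, IsCkCCofactor k α m φ v := ⟨v, hv⟩
  rw [cofactor, dif_pos h]
  exact h.choose_spec.unique hv

lemma isCkCCofactor_cofactor (hφ : φ ∈ C0m k α m) :
    IsCkCCofactor k α m φ (cofactor k α m φ) := by
  obtain ⟨-, v, hv⟩ := hφ
  exact cofactor_eq hv ▸ hv

lemma one_sub_pow_mul_mem_C0m_iff (hv : IsCkC k α v) :
    (fun z : Circle => (1 - (z : ℂ)) ^ m * v z) ∈ C0m k α m ↔ v ∈ Rm k α m := by
  have hreal := isRealValued_one_sub_pow_mul_iff m hv.1.continuous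
  exact ⟨fun h => ⟨hv, congrFun (hreal.1 h.1)⟩,
    fun h => ⟨hreal.2 (funext h.2), v, hv, fun _ => rfl⟩⟩

lemma cofactor_mem_Rm (hφ : φ ∈ C0m k α m) : cofactor k α m φ ∈ Rm k α m := by
  obtain ⟨hreal, v, hv⟩ := hφ
  rw [cofactor_eq hv]
  obtain rfl : φ = fun z : Circle => (1 - (z : ℂ)) ^ m * v z := funext hv.2
  exact (one_sub_pow_mul_mem_C0m_iff hv.1).1 ⟨hreal, v, hv⟩

end Cofactor

theorem stmt_0_general (k : ℕ) (α : ℝ) (m : ℕ) :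
    ∃ τ : (Circle → ℂ) → (Circle → ℂ),
      -- `τ_m ((1-ζ)^m v) = v`
      (∀ v : Circle → ℂ, IsCkC k α v →
        (∀ z : Circle, ((1 - (z : ℂ)) ^ m * v z).im = 0) →
        τ (fun z => (1 - (z : ℂ)) ^ m * v z) = v) ∧
      -- `τ_m` maps `C^{k,α}_{0^m}` bijectively onto `R_m`
      Set.BijOn τ (C0m k α m) (Rm k α (m : ℤ)) ∧
      -- `τ_m` is `ℝ`-linear on `C^{k,α}_{0^m}`
      (∀ φ ψ, φ ∈ C0m k α m → ψ ∈ C0m k α m → τ (φ + ψ) = τ φ + τ ψ) ∧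
      (∀ (c : ℝ) (φ), φ ∈ C0m k α m → τ (c • φ) = c • τ φ) ∧
      -- `τ_m` is isometric
      (∀ φ ∈ C0m k α m, normC0m k α m φ = normCkC k α (τ φ)) := by
  refine ⟨cofactor k α m, fun v hv _ => cofactor_eq ⟨hv, fun _ => rfl⟩,
    ⟨fun φ => cofactor_mem_Rm, ?injOn, ?surjOn⟩, ?add, ?smul,
    fun φ hφ => (isCkCCofactor_cofactor hφ).normC0m_eq⟩
  case injOn =>
    intro φ hφ ψ hψ h
    funext z
    rw [(isCkCCofactor_cofactor hφ).2 z, (isCkCCofactor_cofactor hψ).2 z, h]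
  case surjOn =>
    intro v hv
    exact ⟨_, (one_sub_pow_mul_mem_C0m_iff hv.1).2 hv, cofactor_eq ⟨hv.1, fun _ => rfl⟩⟩
  case add =>
    intro φ ψ hφ hψ
    rw [cofactor_eq ((isCkCCofactor_cofactor hφ).add (isCkCCofactor_cofactor hψ))]
  case smul =>
    intro c φ hφ
    rw [← Complex.coe_smul, ← Complex.coe_smul,
      cofactor_eq ((isCkCCofactor_cofactor hφ).const_smul (c : ℂ))]

/-- The map `τ_m : C^{k,α}_{0^m} → C^{k,α}_ℂ`, `τ_m((1-ζ)^m v) = v`, is an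
isometric Banach space isomorphism from `C^{k,α}_{0^m}` onto the closed subspace `R_m`. -/
theorem stmt_0 (k : ℕ) (α : ℝ) (hα : 0 < α) (hα' : α < 1) (m : ℕ) :
    ∃ τ : (Circle → ℂ) → (Circle → ℂ),
      -- `τ_m ((1-ζ)^m v) = v`
      (∀ v : Circle → ℂ, IsCkC k α v →
        (∀ z : Circle, ((1 - (z : ℂ)) ^ m * v z).im = 0) →
        τ (fun z => (1 - (z : ℂ)) ^ m * v z) = v) ∧
      -- `τ_m` maps `C^{k,α}_{0^m}` bijectively onto `R_m`
      Set.BijOn τ (C0m k α m) (Rm k α (m : ℤ)) ∧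
      -- `τ_m` is `ℝ`-linear on `C^{k,α}_{0^m}`
      (∀ φ ψ, φ ∈ C0m k α m → ψ ∈ C0m k α m → τ (φ + ψ) = τ φ + τ ψ) ∧
      (∀ (c : ℝ) (φ), φ ∈ C0m k α m → τ (c • φ) = c • τ φ) ∧
      -- `τ_m` is isometric
      (∀ φ ∈ C0m k α m, normC0m k α m φ = normCkC k α (τ φ)) :=
  stmt_0_general k α m
end
end

section
/- Let k be a nonnegative integer, 0 < α < 1, and let m be an odd nonnegative integer. The map v(ζ) ↦ i ζ^m v(ζ²) sends R_m = { v ∈ C^{k,α}_ℂ : v(ζ) = (-1)^m ζ^{-m} conj(v(ζ)) for all ζ ∈ bΔ } isomorphically onto the space C^{k,α}_o of odd real-valued C^{k,α} functions on bΔ (those u ∈ C^{k,α} with u(-ζ) = -u(ζ) for all ζ ∈ bΔ). -/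
noncomputable section

open Complex Metric Set Finset
open scoped Classical

/-!
Write `ṽ θ = v (e^{iθ})` for the angular lift. On lifts, `σ` is `ṽ ↦ i e^{imθ} ṽ(2θ)`, and its
inverse is `u ↦ -i e^{-imθ/2} u(θ/2)`. Both are instances of `g ↦ a e^{icθ} g(lθ)`, which the
Leibniz rule and the binomial theorem show to be bounded for the `C^{k,α}` norm of `2π`-periodic
functions. That norm measures Hölder quotients in the chordal metric `|e^{ix} - e^{iy}|`, which is
comparable to `|x - y|` once `y` is moved by a multiple of `2π` to within `π` of `x`; this is why
only periodicity of the image, not of `g(lθ)` itself, is needed when `l = 1/2`.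

For odd `m` the condition defining `R_m` says exactly that `σ v` is real, and `σ v` is odd because
`(-ζ)^m = -ζ^m`. Conversely, an odd real `u` equals `σ v` for `v z = -i s^{-m} u s`, where `s` is
either square root of `z`.
-/

namespace HolderCircle

open Function
open scoped Real ComplexConjugate

lemma norm_circleExp_sub_circleExp (x y : ℝ) :
    ‖(Circle.exp x : ℂ) - Circle.exp y‖ = 2 * |Real.sin ((x - y) / 2)| := by
  have hx : Complex.exp (x * I) = Complex.exp (((x + y) / 2 : ℝ) * I)
      * Complex.exp (((x - y) / 2 : ℝ) * I) := by
    rw [← Complex.exp_add]; congr 1; push_cast; ring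
  have hy : Complex.exp (y * I) = Complex.exp (((x + y) / 2 : ℝ) * I)
      * Complex.exp (-((x - y) / 2 : ℝ) * I) := by
    rw [← Complex.exp_add]; congr 1; push_cast; ring
  have h : (Circle.exp x : ℂ) - Circle.exp y
      = Complex.exp (((x + y) / 2 : ℝ) * I) * (2 * (Real.sin ((x - y) / 2) : ℝ) * I) := by
    rw [Circle.coe_exp, Circle.coe_exp, Complex.ofReal_sin, Complex.sin, hx, hy]
    linear_combination (Complex.exp (((x + y) / 2 : ℝ) * I) * (Complex.exp (((x - y) / 2 : ℝ) * I)
      - Complex.exp (-((x - y) / 2 : ℝ) * I))) * I_sq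
  rw [h, norm_mul, Complex.norm_exp_ofReal_mul_I, one_mul, norm_mul, norm_mul, Complex.norm_real,
    Complex.norm_I, mul_one, Real.norm_eq_abs, Complex.norm_two]

lemma norm_circleExp_sub_le (x y : ℝ) : ‖(Circle.exp x : ℂ) - Circle.exp y‖ ≤ |x - y| := by
  have := Real.abs_sin_le_abs (x := (x - y) / 2)
  rw [norm_circleExp_sub_circleExp]
  rw [abs_div, abs_two] at this
  linarith

lemma abs_sub_le_mul_norm_circleExp_sub {x y : ℝ} (h : |x - y| ≤ π) :
    |x - y| ≤ π / 2 * ‖(Circle.exp x : ℂ) - Circle.exp y‖ := by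
  have := Real.mul_abs_le_abs_sin (x := (x - y) / 2) (by rw [abs_div, abs_two]; linarith)
  rw [norm_circleExp_sub_circleExp]
  rw [abs_div, abs_two] at this
  field_simp at this ⊢
  nlinarith [Real.pi_pos]

lemma exists_abs_sub_add_int_mul_le_pi (x y : ℝ) : ∃ n : ℤ, |x - (y + n * (2 * π))| ≤ π := by
  refine ⟨round ((x - y) / (2 * π)), ?_⟩
  have h := abs_sub_round ((x - y) / (2 * π))
  have e : x - (y + round ((x - y) / (2 * π)) * (2 * π))
      = 2 * π * ((x - y) / (2 * π) - round ((x - y) / (2 * π))) := by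
    field_simp; ring
  rw [e, abs_mul, abs_of_pos Real.two_pi_pos]
  nlinarith [Real.pi_pos]

section ChordHolder

def IsChordHolder (C α : ℝ) (g : ℝ → ℂ) : Prop :=
  ∀ x y, ‖g x - g y‖ ≤ C * ‖(Circle.exp x : ℂ) - Circle.exp y‖ ^ α

variable {C α : ℝ} {g : ℝ → ℂ}

lemma holderWith_of_norm_sub_le (hC : 0 ≤ C) (hα : 0 ≤ α)
    (h : ∀ x y : ℝ, ‖g x - g y‖ ≤ C * |x - y| ^ α) : HolderWith C.toNNReal α.toNNReal g := by
  intro x y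
  rw [edist_dist, edist_dist]
  calc ENNReal.ofReal (dist (g x) (g y)) ≤ ENNReal.ofReal (C * dist x y ^ α) := by
        refine ENNReal.ofReal_le_ofReal ?_
        rw [dist_eq_norm, Real.dist_eq]
        exact h x y
    _ = C.toNNReal * ENNReal.ofReal (dist x y) ^ (α.toNNReal : ℝ) := by
        rw [ENNReal.ofReal_mul hC, ← ENNReal.ofReal_rpow_of_nonneg dist_nonneg hα,
          Real.coe_toNNReal α hα]
        rfl

lemma IsChordHolder.holderWith (hC : 0 ≤ C) (hα : 0 ≤ α) (h : IsChordHolder C α g) :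
    HolderWith C.toNNReal α.toNNReal g :=
  holderWith_of_norm_sub_le hC hα fun x y => (h x y).trans <| mul_le_mul_of_nonneg_left
    (Real.rpow_le_rpow (norm_nonneg _) (norm_circleExp_sub_le x y) hα) hC

lemma holderSem_nonneg (α : ℝ) (g : ℝ → ℂ) : 0 ≤ holderSem α g :=
  Real.iSup_nonneg fun _ => by split_ifs <;> positivity

lemma holderQuotient_le (hC : 0 ≤ C) (h : IsChordHolder C α g) (p : ℝ × ℝ) :
    (if (Circle.exp p.1 : ℂ) = Circle.exp p.2 then 0
      else ‖g p.1 - g p.2‖ / ‖(Circle.exp p.1 : ℂ) - Circle.exp p.2‖ ^ α) ≤ C := by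
  split_ifs with hp
  · exact hC
  · rw [div_le_iff₀ (Real.rpow_pos_of_pos (norm_pos_iff.2 (sub_ne_zero.2 hp)) _)]
    exact h p.1 p.2

lemma holderSem_le (hC : 0 ≤ C) (h : IsChordHolder C α g) : holderSem α g ≤ C :=
  Real.iSup_le (holderQuotient_le hC h) hC

lemma IsChordHolder.holderSem (hα : 0 < α) (hC : 0 ≤ C) (h : IsChordHolder C α g) :
    IsChordHolder (holderSem α g) α g := by
  intro x y
  by_cases hxy : (Circle.exp x : ℂ) = Circle.exp y
  · have := h x y
    rw [hxy, sub_self, norm_zero, Real.zero_rpow hα.ne', mul_zero] at this ⊢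
    exact this
  · have := le_ciSup ⟨C, Set.forall_mem_range.2 (holderQuotient_le hC h)⟩ (x, y)
    simp only [if_neg hxy] at this
    rwa [div_le_iff₀ (Real.rpow_pos_of_pos (norm_pos_iff.2 (sub_ne_zero.2 hxy)) _)] at this

lemma isChordHolder_of_abs_sub_le_pi (hper : Periodic g (2 * π)) (hα : 0 ≤ α) (hα1 : α ≤ 1)
    (hC : 0 ≤ C) (h : ∀ x y, |x - y| ≤ π → ‖g x - g y‖ ≤ C * |x - y| ^ α) :
    IsChordHolder (2 * C) α g := by
  intro x y
  obtain ⟨n, hn⟩ := exists_abs_sub_add_int_mul_le_pi x y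
  have hexp : Circle.exp (y + n * (2 * π)) = Circle.exp y := (Circle.periodic_exp.int_mul n) y
  have hpi : (π / 2) ^ α ≤ 2 :=
    (Real.rpow_le_self_of_one_le (by linarith [Real.pi_gt_three]) hα1).trans
      (by linarith [Real.pi_le_four])
  calc ‖g x - g y‖ = ‖g x - g (y + n * (2 * π))‖ := by rw [hper.int_mul n y]
    _ ≤ C * |x - (y + n * (2 * π))| ^ α := h _ _ hn
    _ ≤ C * ((π / 2) ^ α * ‖(Circle.exp x : ℂ) - Circle.exp y‖ ^ α) := by
      rw [← Real.mul_rpow (by positivity) (norm_nonneg _), ← hexp]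
      exact mul_le_mul_of_nonneg_left
        (Real.rpow_le_rpow (abs_nonneg _) (abs_sub_le_mul_norm_circleExp_sub hn) hα) hC
    _ ≤ 2 * C * ‖(Circle.exp x : ℂ) - Circle.exp y‖ ^ α := by
      rw [mul_comm 2 C, mul_assoc]
      exact mul_le_mul_of_nonneg_left
        (mul_le_mul_of_nonneg_right hpi (by positivity)) hC

lemma _root_.HolderWith.isChordHolder {K : NNReal} (hper : Periodic g (2 * π)) (hα : 0 ≤ α)
    (hα1 : α ≤ 1) (h : HolderWith K α.toNNReal g) : IsChordHolder (2 * K) α g :=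
  isChordHolder_of_abs_sub_le_pi hper hα hα1 K.2 fun x y _ => by
    simpa [dist_eq_norm, Real.dist_eq, Real.coe_toNNReal α hα] using h.dist_le x y

end ChordHolder

section IteratedDeriv

variable {𝕜 F : Type*} [NontriviallyNormedField 𝕜] [NormedAddCommGroup F] [NormedSpace 𝕜 F]
  {g : 𝕜 → F} {c : 𝕜}

lemma _root_.Function.Periodic.deriv (h : Periodic g c) :
    Periodic (deriv g) c := fun x => by
  rw [← deriv_comp_add_const, show (fun y => g (y + c)) = g from funext h]

lemma _root_.Function.Periodic.iteratedDeriv (h : Periodic g c) (n : ℕ) :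
    Periodic (iteratedDeriv n g) c := by
  induction n with
  | zero => simpa using h
  | succ n ih => simpa [iteratedDeriv_succ] using ih.deriv

lemma iteratedDeriv_clm_comp {G : Type*} [NormedAddCommGroup G] [NormedSpace 𝕜 G] {n : ℕ}
    (R : F →L[𝕜] G) (hg : ContDiff 𝕜 n g) :
    iteratedDeriv n (fun t => R (g t)) = fun t => R (iteratedDeriv n g t) := by
  funext t
  simp only [iteratedDeriv_eq_iteratedFDeriv]
  rw [show (fun t => R (g t)) = R ∘ g from rfl, R.iteratedFDeriv_comp_left hg.contDiffAt le_rfl]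
  rfl

end IteratedDeriv

lemma supN_nonneg (g : ℝ → ℂ) : 0 ≤ supN g := Real.iSup_nonneg fun _ => norm_nonneg _

lemma supN_le {g : ℝ → ℂ} {M : ℝ} (hM : 0 ≤ M) (h : ∀ θ, ‖g θ‖ ≤ M) : supN g ≤ M :=
  Real.iSup_le h hM

lemma norm_le_supN {g : ℝ → ℂ} (hc : Continuous g) (hper : Periodic g (2 * π)) (θ : ℝ) :
    ‖g θ‖ ≤ supN g := by
  obtain ⟨M, hM⟩ :=
    (isCompact_Icc (a := 0) (b := 2 * π)).exists_bound_of_continuousOn hc.continuousOn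
  refine le_ciSup (f := fun θ => ‖g θ‖) ⟨M, Set.forall_mem_range.2 fun θ => ?_⟩ θ
  obtain ⟨y, hy, hθy⟩ := hper.exists_mem_Ico₀ Real.two_pi_pos θ
  rw [hθy]
  exact hM y (Set.Ico_subset_Icc_self hy)

def holderNorm (k : ℕ) (α : ℝ) (g : ℝ → ℂ) : ℝ :=
  (∑ j ∈ range (k + 1), supN (iteratedDeriv j g)) + holderSem α (iteratedDeriv k g)

def IsHolderCk (k : ℕ) (α : ℝ) (g : ℝ → ℂ) : Prop :=
  ContDiff ℝ (k : ℕ∞) g ∧ ∃ C : NNReal, HolderWith C α.toNNReal (iteratedDeriv k g)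

lemma holderNorm_nonneg (k : ℕ) (α : ℝ) (g : ℝ → ℂ) : 0 ≤ holderNorm k α g :=
  add_nonneg (sum_nonneg fun _ _ => supN_nonneg _) (holderSem_nonneg _ _)

lemma supN_le_holderNorm {k j : ℕ} (hj : j ≤ k) (α : ℝ) (g : ℝ → ℂ) :
    supN (iteratedDeriv j g) ≤ holderNorm k α g :=
  (single_le_sum (f := fun j => supN (iteratedDeriv j g)) (fun _ _ => supN_nonneg _)
    (mem_range.2 (Nat.lt_succ_of_le hj))).trans (le_add_of_nonneg_right (holderSem_nonneg _ _))

lemma holderSem_le_holderNorm (k : ℕ) (α : ℝ) (g : ℝ → ℂ) :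
    holderSem α (iteratedDeriv k g) ≤ holderNorm k α g :=
  le_add_of_nonneg_left (sum_nonneg fun _ _ => supN_nonneg _)

namespace IsHolderCk

variable {k : ℕ} {α : ℝ} {g : ℝ → ℂ}

lemma continuous_iteratedDeriv (hg : IsHolderCk k α g) {j : ℕ} (hj : j ≤ k) :
    Continuous (iteratedDeriv j g) :=
  hg.1.continuous_iteratedDeriv j (by exact_mod_cast hj)

lemma norm_iteratedDeriv_le (hg : IsHolderCk k α g) (hper : Periodic g (2 * π)) {j : ℕ}
    (hj : j ≤ k) (θ : ℝ) : ‖iteratedDeriv j g θ‖ ≤ holderNorm k α g :=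
  (norm_le_supN (hg.continuous_iteratedDeriv hj) (hper.iteratedDeriv j) θ).trans
    (supN_le_holderNorm hj α g)

lemma isChordHolder_holderSem (hg : IsHolderCk k α g) (hper : Periodic g (2 * π))
    (hα : 0 < α) (hα1 : α ≤ 1) :
    IsChordHolder (holderSem α (iteratedDeriv k g)) α (iteratedDeriv k g) := by
  obtain ⟨K, hK⟩ := hg.2
  exact (hK.isChordHolder (hper.iteratedDeriv k) hα.le hα1).holderSem hα (by positivity)

lemma isChordHolder_holderNorm (hg : IsHolderCk k α g) (hper : Periodic g (2 * π))
    (hα : 0 < α) (hα1 : α ≤ 1) :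
    IsChordHolder (holderNorm k α g) α (iteratedDeriv k g) := fun x y =>
  (hg.isChordHolder_holderSem hper hα hα1 x y).trans (mul_le_mul_of_nonneg_right
    (holderSem_le_holderNorm k α g) (by positivity))

end IsHolderCk

lemma abs_le_pi_mul_abs_rpow {t α : ℝ} (hα : 0 ≤ α) (hα1 : α ≤ 1) (ht : |t| ≤ π) :
    |t| ≤ π * |t| ^ α := by
  have hπ := Real.pi_pos
  have h1 : |t| / π ≤ (|t| / π) ^ α :=
    Real.self_le_rpow_of_le_one (by positivity) ((div_le_one hπ).2 ht) hα1
  calc |t| = π * (|t| / π) := by field_simp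
    _ ≤ π * (|t| / π) ^ α := mul_le_mul_of_nonneg_left h1 hπ.le
    _ ≤ π * |t| ^ α := by
      rw [Real.div_rpow (abs_nonneg t) hπ.le]
      gcongr
      exact div_le_self (by positivity) (Real.one_le_rpow (by linarith [Real.pi_gt_three]) hα)

lemma rpow_le_one_add {t α : ℝ} (ht : 0 ≤ t) (hα : 0 ≤ α) (hα1 : α ≤ 1) : t ^ α ≤ 1 + t := by
  rcases le_or_gt t 1 with h | h
  · linarith [Real.rpow_le_one ht h hα]
  · linarith [Real.rpow_le_self_of_one_le h.le hα1]

lemma norm_sum_mul_le {ι R : Type*} [SeminormedRing R] (s : Finset ι) (b F : ι → R) {D : ℝ}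
    (hF : ∀ i ∈ s, ‖F i‖ ≤ D) : ‖∑ i ∈ s, b i * F i‖ ≤ (∑ i ∈ s, ‖b i‖) * D := by
  rw [sum_mul]
  exact norm_sum_le_of_le s fun i hi => (norm_mul_le _ _).trans
    (mul_le_mul_of_nonneg_left (hF i hi) (norm_nonneg _))

def twist (a : ℂ) (c l : ℝ) (g : ℝ → ℂ) : ℝ → ℂ :=
  fun t => a * Complex.exp ((c * t : ℝ) * I) * g (l * t)

lemma hasDerivAt_cexp_ofReal_mul_I (c t : ℝ) :
    HasDerivAt (fun t : ℝ => Complex.exp ((c * t : ℝ) * I))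
      (c * I * Complex.exp ((c * t : ℝ) * I)) t := by
  have := (((hasDerivAt_id t).const_mul c).ofReal_comp.mul_const I).cexp
  simpa [mul_comm, mul_left_comm, mul_assoc] using this

lemma iteratedDeriv_const_mul_cexp (a : ℂ) (c : ℝ) (n : ℕ) :
    iteratedDeriv n (fun t : ℝ => a * Complex.exp ((c * t : ℝ) * I))
      = fun t => a * (c * I) ^ n * Complex.exp ((c * t : ℝ) * I) := by
  induction n with
  | zero => simp
  | succ n ih =>
    funext t
    rw [iteratedDeriv_succ, ih, ((hasDerivAt_cexp_ofReal_mul_I c t).const_mul _).deriv]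
    ring

lemma contDiff_const_mul_cexp {n : ℕ∞} (a : ℂ) (c : ℝ) :
    ContDiff ℝ n (fun t : ℝ => a * Complex.exp ((c * t : ℝ) * I)) :=
  contDiff_const.mul (Complex.contDiff_exp.comp
    ((Complex.ofRealCLM.contDiff.comp (contDiff_const.mul contDiff_id)).mul contDiff_const))

lemma contDiff_twist {n : ℕ∞} (a : ℂ) (c l : ℝ) {g : ℝ → ℂ} (hg : ContDiff ℝ n g) :
    ContDiff ℝ n (twist a c l g) :=
  (contDiff_const_mul_cexp a c).mul (hg.comp (contDiff_const.mul contDiff_id))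

lemma iteratedDeriv_twist {n : ℕ} (a : ℂ) (c l : ℝ) {g : ℝ → ℂ} (hg : ContDiff ℝ n g)
    (θ : ℝ) :
    iteratedDeriv n (twist a c l g) θ = ∑ i ∈ range (n + 1),
      n.choose i * a * (c * I) ^ i * l ^ (n - i)
        * (Complex.exp ((c * θ : ℝ) * I) * iteratedDeriv (n - i) g (l * θ)) := by
  unfold twist
  rw [iteratedDeriv_fun_mul (f := fun t => a * Complex.exp ((c * t : ℝ) * I))
    (g := fun t => g (l * t)) (contDiff_const_mul_cexp a c).contDiffAt
    (hg.comp (contDiff_const.mul contDiff_id)).contDiffAt]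
  refine sum_congr rfl fun i _ => ?_
  rw [iteratedDeriv_const_mul_cexp,
    iteratedDeriv_comp_const_smul (hg.of_le (by exact_mod_cast Nat.sub_le n i))]
  simp only [Complex.real_smul]
  push_cast
  ring

lemma sum_norm_twist_coeff (a : ℂ) (c l : ℝ) (n : ℕ) :
    ∑ i ∈ range (n + 1), ‖(n.choose i : ℂ) * a * (c * I) ^ i * l ^ (n - i)‖
      = ‖a‖ * (|c| + |l|) ^ n := by
  rw [add_pow, mul_sum]
  refine sum_congr rfl fun i _ => ?_
  simp only [norm_mul, norm_pow, Complex.norm_natCast, Complex.norm_real, Complex.norm_I,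
    Real.norm_eq_abs, mul_one]
  ring

def twistFactor (k : ℕ) (a : ℂ) (c l : ℝ) : ℝ :=
  ‖a‖ * (1 + |c| + |l|) ^ (k + 1)

lemma twistFactor_nonneg (k : ℕ) (a : ℂ) (c l : ℝ) : 0 ≤ twistFactor k a c l := by
  unfold twistFactor; positivity

section Estimates

variable {k : ℕ} {α : ℝ} {g : ℝ → ℂ}

lemma IsHolderCk.norm_iteratedDeriv_comp_mul_sub_le (hg : IsHolderCk k α g)
    (hper : Periodic g (2 * π)) (hα : 0 < α) (hα1 : α ≤ 1) {j : ℕ} (hj : j ≤ k) (l : ℝ)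
    {x y : ℝ} (hxy : |x - y| ≤ π) :
    ‖iteratedDeriv j g (l * x) - iteratedDeriv j g (l * y)‖
      ≤ (π + 1) * (1 + |l|) * holderNorm k α g * |x - y| ^ α := by
  have hM := holderNorm_nonneg k α g
  have hπ := Real.pi_pos
  have hrpow : 0 ≤ |x - y| ^ α := by positivity
  rcases hj.lt_or_eq with hjk | hjk
  · have hlip := convex_univ.norm_image_sub_le_of_norm_deriv_le (x := l * y) (y := l * x)
      (fun s _ => (hg.1.differentiable_iteratedDeriv j (by exact_mod_cast hjk)) s)
      (fun s _ => by
        rw [← iteratedDeriv_succ]; exact hg.norm_iteratedDeriv_le hper hjk s)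
      trivial trivial
    rw [← mul_sub, norm_mul, Real.norm_eq_abs, Real.norm_eq_abs] at hlip
    calc _ ≤ holderNorm k α g * (|l| * |x - y|) := hlip
      _ ≤ holderNorm k α g * (|l| * (π * |x - y| ^ α)) := by
        gcongr; exact abs_le_pi_mul_abs_rpow hα.le hα1 hxy
      _ ≤ (π + 1) * (1 + |l|) * holderNorm k α g * |x - y| ^ α := by
        nlinarith [abs_nonneg l, mul_nonneg hM hrpow,
          mul_nonneg (abs_nonneg l) (mul_nonneg hM hrpow)]
  · rw [hjk]
    calc _ ≤ holderNorm k α g * ‖(Circle.exp (l * x) : ℂ) - Circle.exp (l * y)‖ ^ α :=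
          hg.isChordHolder_holderNorm hper hα hα1 _ _
      _ ≤ holderNorm k α g * (|l| ^ α * |x - y| ^ α) := by
        rw [← Real.mul_rpow (abs_nonneg _) (abs_nonneg _), ← abs_mul, mul_sub]
        gcongr
        exact norm_circleExp_sub_le _ _
      _ ≤ holderNorm k α g * ((1 + |l|) * |x - y| ^ α) := by
        gcongr; exact rpow_le_one_add (abs_nonneg l) hα.le hα1
      _ ≤ (π + 1) * (1 + |l|) * holderNorm k α g * |x - y| ^ α := by
        nlinarith [abs_nonneg l, mul_nonneg (mul_nonneg (abs_nonneg l) hM) hrpow,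
          mul_nonneg hM hrpow]

lemma IsHolderCk.norm_cexp_mul_iteratedDeriv_sub_le (hg : IsHolderCk k α g)
    (hper : Periodic g (2 * π)) (hα : 0 < α) (hα1 : α ≤ 1) {j : ℕ} (hj : j ≤ k) (c l : ℝ)
    {x y : ℝ} (hxy : |x - y| ≤ π) :
    ‖Complex.exp ((c * x : ℝ) * I) * iteratedDeriv j g (l * x)
        - Complex.exp ((c * y : ℝ) * I) * iteratedDeriv j g (l * y)‖
      ≤ 2 * (π + 1) * (1 + |c| + |l|) * holderNorm k α g * |x - y| ^ α := by
  have hM := holderNorm_nonneg k α g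
  have hπ := Real.pi_pos
  have hr : 0 ≤ |x - y| ^ α := by positivity
  have hG := hg.norm_iteratedDeriv_comp_mul_sub_le hper hα hα1 hj l hxy
  have hE : ‖Complex.exp ((c * x : ℝ) * I) - Complex.exp ((c * y : ℝ) * I)‖
      ≤ |c| * (π * |x - y| ^ α) := by
    rw [← Circle.coe_exp, ← Circle.coe_exp]
    refine (norm_circleExp_sub_le _ _).trans ?_
    rw [← mul_sub, abs_mul]
    exact mul_le_mul_of_nonneg_left (abs_le_pi_mul_abs_rpow hα.le hα1 hxy) (abs_nonneg c)
  calc _ = ‖Complex.exp ((c * x : ℝ) * I) * (iteratedDeriv j g (l * x) - iteratedDeriv j g (l * y))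
        + (Complex.exp ((c * x : ℝ) * I) - Complex.exp ((c * y : ℝ) * I))
          * iteratedDeriv j g (l * y)‖ := by ring_nf
    _ ≤ (π + 1) * (1 + |l|) * holderNorm k α g * |x - y| ^ α
        + |c| * (π * |x - y| ^ α) * holderNorm k α g := by
      refine (norm_add_le _ _).trans (add_le_add ?_ ?_)
      · rw [norm_mul, Complex.norm_exp_ofReal_mul_I, one_mul]; exact hG
      · rw [norm_mul]
        exact mul_le_mul hE (hg.norm_iteratedDeriv_le hper hj _) (norm_nonneg _) (by positivity)
    _ ≤ 2 * (π + 1) * (1 + |c| + |l|) * holderNorm k α g * |x - y| ^ α := by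
      have hMr := mul_nonneg hM hr
      nlinarith [mul_nonneg hMr (abs_nonneg c), mul_nonneg hMr (abs_nonneg l),
        mul_nonneg (mul_nonneg hMr (abs_nonneg c)) hπ.le,
        mul_nonneg (mul_nonneg hMr (abs_nonneg l)) hπ.le, mul_nonneg hMr hπ.le]

lemma pow_le_one_add_abs_add_abs_pow {n k : ℕ} (hn : n ≤ k + 1) (c l : ℝ) :
    (|c| + |l|) ^ n ≤ (1 + |c| + |l|) ^ (k + 1) :=
  (pow_le_pow_left₀ (by positivity) (by linarith) n).trans
    (pow_le_pow_right₀ (by linarith [abs_nonneg c, abs_nonneg l]) hn)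

lemma IsHolderCk.norm_iteratedDeriv_twist_le (hg : IsHolderCk k α g)
    (hper : Periodic g (2 * π)) (a : ℂ) (c l : ℝ) {n : ℕ} (hn : n ≤ k) (θ : ℝ) :
    ‖iteratedDeriv n (twist a c l g) θ‖
      ≤ twistFactor k a c l * holderNorm k α g := by
  rw [iteratedDeriv_twist a c l (hg.1.of_le (by exact_mod_cast hn))]
  refine (norm_sum_mul_le _ _ _ (D := holderNorm k α g) fun i hi => ?_).trans ?_
  · rw [norm_mul, Complex.norm_exp_ofReal_mul_I, one_mul]
    exact hg.norm_iteratedDeriv_le hper (by omega) _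
  · rw [sum_norm_twist_coeff, twistFactor]
    gcongr
    · exact holderNorm_nonneg k α g
    · exact pow_le_one_add_abs_add_abs_pow (by omega) c l

lemma IsHolderCk.norm_iteratedDeriv_twist_sub_le (hg : IsHolderCk k α g)
    (hper : Periodic g (2 * π)) (hα : 0 < α) (hα1 : α ≤ 1) (a : ℂ) (c l : ℝ) {x y : ℝ}
    (hxy : |x - y| ≤ π) :
    ‖iteratedDeriv k (twist a c l g) x - iteratedDeriv k (twist a c l g) y‖
      ≤ 2 * (π + 1) * twistFactor k a c l * holderNorm k α g * |x - y| ^ α := by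
  rw [iteratedDeriv_twist a c l hg.1, iteratedDeriv_twist a c l hg.1, ← sum_sub_distrib]
  simp_rw [← mul_sub]
  refine (norm_sum_mul_le _ _ _ fun i hi =>
    hg.norm_cexp_mul_iteratedDeriv_sub_le hper hα hα1 (Nat.sub_le k i) c l hxy).trans ?_
  rw [sum_norm_twist_coeff]
  have hr : 0 ≤ holderNorm k α g * |x - y| ^ α :=
    mul_nonneg (holderNorm_nonneg k α g) (by positivity)
  have hQ : ‖a‖ * (|c| + |l|) ^ k * (1 + |c| + |l|) ≤ twistFactor k a c l := by
    rw [twistFactor, pow_succ, ← mul_assoc]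
    gcongr
    linarith
  calc _ = 2 * (π + 1) * (‖a‖ * (|c| + |l|) ^ k * (1 + |c| + |l|))
        * (holderNorm k α g * |x - y| ^ α) := by ring
    _ ≤ 2 * (π + 1) * twistFactor k a c l * (holderNorm k α g * |x - y| ^ α) := by
      gcongr
    _ = _ := by ring

def twistConst (k : ℕ) (a : ℂ) (c l : ℝ) : ℝ :=
  (k + 4 * π + 5) * twistFactor k a c l

lemma twistConst_nonneg (k : ℕ) (a : ℂ) (c l : ℝ) : 0 ≤ twistConst k a c l :=
  mul_nonneg (by positivity) (twistFactor_nonneg k a c l)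

lemma isChordHolder_iteratedDeriv_twist (hg : IsHolderCk k α g) (hper : Periodic g (2 * π))
    (hα : 0 < α) (hα1 : α ≤ 1) (a : ℂ) (c l : ℝ) (hper' : Periodic (twist a c l g) (2 * π)) :
    IsChordHolder (4 * (π + 1) * twistFactor k a c l * holderNorm k α g) α
      (iteratedDeriv k (twist a c l g)) := by
  have := isChordHolder_of_abs_sub_le_pi (hper'.iteratedDeriv k) hα.le hα1
    (mul_nonneg (mul_nonneg (by positivity) (twistFactor_nonneg k a c l))
      (holderNorm_nonneg k α g))
    fun x y hxy => hg.norm_iteratedDeriv_twist_sub_le hper hα hα1 a c l hxy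
  convert this using 1
  ring

theorem isHolderCk_twist (hg : IsHolderCk k α g) (hper : Periodic g (2 * π)) (hα : 0 < α)
    (hα1 : α ≤ 1) (a : ℂ) (c l : ℝ) (hper' : Periodic (twist a c l g) (2 * π)) :
    IsHolderCk k α (twist a c l g) :=
  ⟨contDiff_twist a c l hg.1, _,
    (isChordHolder_iteratedDeriv_twist hg hper hα hα1 a c l hper').holderWith
      (mul_nonneg (mul_nonneg (by positivity) (twistFactor_nonneg k a c l))
        (holderNorm_nonneg k α g)) hα.le⟩

theorem holderNorm_twist_le (hg : IsHolderCk k α g) (hper : Periodic g (2 * π)) (hα : 0 < α)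
    (hα1 : α ≤ 1) (a : ℂ) (c l : ℝ) (hper' : Periodic (twist a c l g) (2 * π)) :
    holderNorm k α (twist a c l g) ≤ twistConst k a c l * holderNorm k α g := by
  set B := twistFactor k a c l
  have hB : 0 ≤ B * holderNorm k α g :=
    mul_nonneg (twistFactor_nonneg k a c l) (holderNorm_nonneg k α g)
  have hsup : ∀ j ∈ range (k + 1),
      supN (iteratedDeriv j (twist a c l g)) ≤ B * holderNorm k α g := fun j hj =>
    supN_le hB (hg.norm_iteratedDeriv_twist_le hper a c l (Nat.lt_succ_iff.1 (mem_range.1 hj)))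
  have hsem := holderSem_le (by rw [mul_assoc]; exact mul_nonneg (by positivity) hB)
    (isChordHolder_iteratedDeriv_twist hg hper hα hα1 a c l hper')
  calc holderNorm k α (twist a c l g)
      ≤ (k + 1) * (B * holderNorm k α g) + 4 * (π + 1) * B * holderNorm k α g := by
        refine add_le_add ((sum_le_sum hsup).trans_eq ?_) hsem
        simp
    _ = twistConst k a c l * holderNorm k α g := by rw [twistConst]; ring

end Estimates

lemma IsChordHolder.clm_comp {C α : ℝ} {f : ℝ → ℂ} (h : IsChordHolder C α f) (R : ℂ →L[ℝ] ℂ)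
    (hR : ∀ z, ‖R z‖ ≤ ‖z‖) : IsChordHolder C α (fun t => R (f t)) := fun x y =>
  (map_sub R (f x) (f y) ▸ hR _).trans (h x y)

section ClmComp

variable {k : ℕ} {α : ℝ} {g : ℝ → ℂ}

lemma supN_clm_comp_iteratedDeriv_le (hg : IsHolderCk k α g) (hper : Periodic g (2 * π))
    {j : ℕ} (hj : j ≤ k) (R : ℂ →L[ℝ] ℂ) (hR : ∀ z, ‖R z‖ ≤ ‖z‖) :
    supN (iteratedDeriv j fun t => R (g t)) ≤ supN (iteratedDeriv j g) := by
  rw [iteratedDeriv_clm_comp R (hg.1.of_le (by exact_mod_cast hj))]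
  exact supN_le (supN_nonneg _) fun θ => (hR _).trans
    (norm_le_supN (hg.continuous_iteratedDeriv hj) (hper.iteratedDeriv j) θ)

lemma isChordHolder_clm_comp_iteratedDeriv (hg : IsHolderCk k α g) (hper : Periodic g (2 * π))
    (hα : 0 < α) (hα1 : α ≤ 1) (R : ℂ →L[ℝ] ℂ) (hR : ∀ z, ‖R z‖ ≤ ‖z‖) :
    IsChordHolder (holderSem α (iteratedDeriv k g)) α (iteratedDeriv k fun t => R (g t)) := by
  rw [iteratedDeriv_clm_comp R hg.1]
  exact (hg.isChordHolder_holderSem hper hα hα1).clm_comp R hR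

lemma holderNorm_clm_comp_le (hg : IsHolderCk k α g) (hper : Periodic g (2 * π))
    (hα : 0 < α) (hα1 : α ≤ 1) (R : ℂ →L[ℝ] ℂ) (hR : ∀ z, ‖R z‖ ≤ ‖z‖) :
    holderNorm k α (fun t => R (g t)) ≤ holderNorm k α g :=
  add_le_add
    (sum_le_sum fun _ hj => supN_clm_comp_iteratedDeriv_le hg hper
      (Nat.lt_succ_iff.1 (mem_range.1 hj)) R hR)
    (holderSem_le (holderSem_nonneg _ _)
      (isChordHolder_clm_comp_iteratedDeriv hg hper hα hα1 R hR))

lemma supN_iteratedDeriv_le_add_clm_comp (hg : IsHolderCk k α g) (hper : Periodic g (2 * π))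
    {j : ℕ} (hj : j ≤ k) (R₁ R₂ : ℂ →L[ℝ] ℂ) (hR : ∀ z, ‖z‖ ≤ ‖R₁ z‖ + ‖R₂ z‖) :
    supN (iteratedDeriv j g)
      ≤ supN (iteratedDeriv j fun t => R₁ (g t)) + supN (iteratedDeriv j fun t => R₂ (g t)) := by
  have hc := hg.continuous_iteratedDeriv hj
  rw [iteratedDeriv_clm_comp R₁ (hg.1.of_le (by exact_mod_cast hj)),
    iteratedDeriv_clm_comp R₂ (hg.1.of_le (by exact_mod_cast hj))]
  refine supN_le (add_nonneg (supN_nonneg _) (supN_nonneg _)) fun θ => (hR _).trans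
    (add_le_add (norm_le_supN (R₁.continuous.comp hc) ?_ θ)
      (norm_le_supN (R₂.continuous.comp hc) ?_ θ)) <;>
  exact (hper.iteratedDeriv j).comp _

lemma holderSem_iteratedDeriv_le_add_clm_comp (hg : IsHolderCk k α g)
    (hper : Periodic g (2 * π)) (hα : 0 < α) (hα1 : α ≤ 1) (R₁ R₂ : ℂ →L[ℝ] ℂ)
    (hR₁ : ∀ z, ‖R₁ z‖ ≤ ‖z‖) (hR₂ : ∀ z, ‖R₂ z‖ ≤ ‖z‖) (hR : ∀ z, ‖z‖ ≤ ‖R₁ z‖ + ‖R₂ z‖) :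
    holderSem α (iteratedDeriv k g) ≤ holderSem α (iteratedDeriv k fun t => R₁ (g t))
      + holderSem α (iteratedDeriv k fun t => R₂ (g t)) := by
  have h₁ := (isChordHolder_clm_comp_iteratedDeriv hg hper hα hα1 R₁ hR₁).holderSem hα
    (holderSem_nonneg _ _)
  have h₂ := (isChordHolder_clm_comp_iteratedDeriv hg hper hα hα1 R₂ hR₂).holderSem hα
    (holderSem_nonneg _ _)
  rw [iteratedDeriv_clm_comp R₁ hg.1] at h₁ ⊢
  rw [iteratedDeriv_clm_comp R₂ hg.1] at h₂ ⊢
  refine holderSem_le (add_nonneg (holderSem_nonneg _ _) (holderSem_nonneg _ _)) fun x y => ?_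
  calc _ ≤ ‖R₁ (iteratedDeriv k g x - iteratedDeriv k g y)‖
        + ‖R₂ (iteratedDeriv k g x - iteratedDeriv k g y)‖ := hR _
    _ ≤ _ := by
      rw [map_sub, map_sub, add_mul]
      exact add_le_add (h₁ x y) (h₂ x y)

lemma holderNorm_le_add_clm_comp (hg : IsHolderCk k α g) (hper : Periodic g (2 * π))
    (hα : 0 < α) (hα1 : α ≤ 1) (R₁ R₂ : ℂ →L[ℝ] ℂ) (hR₁ : ∀ z, ‖R₁ z‖ ≤ ‖z‖)
    (hR₂ : ∀ z, ‖R₂ z‖ ≤ ‖z‖) (hR : ∀ z, ‖z‖ ≤ ‖R₁ z‖ + ‖R₂ z‖) :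
    holderNorm k α g
      ≤ holderNorm k α (fun t => R₁ (g t)) + holderNorm k α (fun t => R₂ (g t)) := by
  refine (add_le_add (sum_le_sum fun j hj => supN_iteratedDeriv_le_add_clm_comp hg hper
    (Nat.lt_succ_iff.1 (mem_range.1 hj)) R₁ R₂ hR)
    (holderSem_iteratedDeriv_le_add_clm_comp hg hper hα hα1 R₁ R₂ hR₁ hR₂ hR)).trans_eq ?_
  rw [sum_add_distrib, holderNorm, holderNorm]
  ring

end ClmComp

lemma periodic_liftC (f : Circle → ℂ) : Periodic (liftC f) (2 * π) := fun θ =>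
  congrArg f (Circle.periodic_exp θ)

def ofRealReCLM : ℂ →L[ℝ] ℂ := Complex.ofRealCLM.comp Complex.reCLM

def ofRealImCLM : ℂ →L[ℝ] ℂ := Complex.ofRealCLM.comp Complex.imCLM

lemma norm_ofRealReCLM_le (z : ℂ) : ‖ofRealReCLM z‖ ≤ ‖z‖ := by
  simpa [ofRealReCLM] using Complex.abs_re_le_norm z

lemma norm_ofRealImCLM_le (z : ℂ) : ‖ofRealImCLM z‖ ≤ ‖z‖ := by
  simpa [ofRealImCLM] using Complex.abs_im_le_norm z

lemma norm_le_ofRealReCLM_add_ofRealImCLM (z : ℂ) : ‖z‖ ≤ ‖ofRealReCLM z‖ + ‖ofRealImCLM z‖ := by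
  simpa [ofRealReCLM, ofRealImCLM] using Complex.norm_le_abs_re_add_abs_im z

lemma normCkC_eq (k : ℕ) (α : ℝ) (f : Circle → ℂ) :
    normCkC k α f = holderNorm k α (fun t => ofRealReCLM (liftC f t))
      + holderNorm k α (fun t => ofRealImCLM (liftC f t)) := rfl

lemma normCkC_nonneg (k : ℕ) (α : ℝ) (f : Circle → ℂ) : 0 ≤ normCkC k α f :=
  add_nonneg (holderNorm_nonneg k α _) (holderNorm_nonneg k α _)

section Lift

variable {k : ℕ} {α : ℝ} {f : Circle → ℂ}

lemma holderNorm_liftC_le_normCkC (hf : IsCkC k α f) (hα : 0 < α) (hα1 : α ≤ 1) :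
    holderNorm k α (liftC f) ≤ normCkC k α f :=
  normCkC_eq k α f ▸ holderNorm_le_add_clm_comp hf (periodic_liftC f) hα hα1 _ _
    norm_ofRealReCLM_le norm_ofRealImCLM_le norm_le_ofRealReCLM_add_ofRealImCLM

lemma normCkC_le_two_mul_holderNorm_liftC (hf : IsCkC k α f) (hα : 0 < α) (hα1 : α ≤ 1) :
    normCkC k α f ≤ 2 * holderNorm k α (liftC f) := by
  rw [normCkC_eq, two_mul]
  exact add_le_add
    (holderNorm_clm_comp_le hf (periodic_liftC f) hα hα1 _ norm_ofRealReCLM_le)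
    (holderNorm_clm_comp_le hf (periodic_liftC f) hα hα1 _ norm_ofRealImCLM_le)

end Lift

section SqTwist

def sqTwist (m : ℕ) (v : Circle → ℂ) : Circle → ℂ := fun ξ => I * (ξ : ℂ) ^ m * v (ξ ^ 2)

def circleSqrt (z : Circle) : Circle := Circle.exp (arg z / 2)

lemma circleSqrt_sq (z : Circle) : circleSqrt z ^ 2 = z := by
  rw [circleSqrt, ← Circle.exp_natCast_mul, Nat.cast_ofNat, mul_div_cancel₀ _ two_ne_zero,
    Circle.exp_arg]

lemma eq_or_eq_neg_of_sq_eq {w ξ : Circle} (h : w ^ 2 = ξ ^ 2) : w = ξ ∨ w = -ξ := by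
  have h' : ((w : ℂ) - ξ) * ((w : ℂ) + ξ) = 0 := by
    have := congrArg ((↑) : Circle → ℂ) h
    rw [Circle.coe_pow, Circle.coe_pow] at this
    linear_combination this
  rcases mul_eq_zero.1 h' with h'' | h''
  · exact Or.inl (Circle.ext (sub_eq_zero.1 h''))
  · exact Or.inr (Circle.ext (by rw [Circle.coe_neg]; exact eq_neg_of_add_eq_zero_left h''))

lemma conj_coe_circle (z : Circle) : conj (z : ℂ) = (z : ℂ)⁻¹ := by
  rw [← Circle.coe_inv_eq_conj, Circle.coe_inv]

lemma sqTwist_add (m : ℕ) (v w : Circle → ℂ) : sqTwist m (v + w) = sqTwist m v + sqTwist m w :=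
  funext fun ξ => by simp only [sqTwist, Pi.add_apply]; ring

lemma sqTwist_smul (m : ℕ) (c : ℝ) (v : Circle → ℂ) : sqTwist m (c • v) = c • sqTwist m v :=
  funext fun ξ => by simp only [sqTwist, Pi.smul_apply, Complex.real_smul]; ring

lemma liftC_sqTwist (m : ℕ) (v : Circle → ℂ) :
    liftC (sqTwist m v) = twist I m 2 (liftC v) := by
  funext θ
  simp only [liftC, sqTwist, twist]
  rw [← Circle.coe_pow, ← Circle.exp_natCast_mul, ← Circle.exp_natCast_mul, Circle.coe_exp]
  norm_num

lemma liftC_eq_twist_liftC_sqTwist (m : ℕ) (v : Circle → ℂ) :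
    liftC v = twist (-I) (-m / 2) (1 / 2) (liftC (sqTwist m v)) := by
  funext θ
  have e : Complex.exp ((-m / 2 * θ : ℝ) * I) * Complex.exp ((m * (1 / 2 * θ) : ℝ) * I) = 1 := by
    rw [← Complex.exp_add, ← Complex.exp_zero]
    congr 1
    push_cast
    ring
  rw [liftC_sqTwist]
  simp only [twist]
  rw [show (2 : ℝ) * (1 / 2 * θ) = θ by ring]
  linear_combination (Complex.exp ((-m / 2 * θ : ℝ) * I) * Complex.exp ((m * (1 / 2 * θ) : ℝ) * I)
    * liftC v θ) * I_sq - liftC v θ * e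

lemma rm_condition_iff {m : ℕ} (hm : Odd m) (z : Circle) (w : ℂ) :
    w = (-1 : ℂ) ^ (m : ℤ) * (z : ℂ) ^ (-(m : ℤ)) * conj w ↔ conj w = -((z : ℂ) ^ m) * w := by
  have hz : (z : ℂ) ^ m ≠ 0 := pow_ne_zero _ z.coe_ne_zero
  rw [zpow_natCast, hm.neg_one_pow, zpow_neg, zpow_natCast]
  constructor <;> intro h
  · conv_rhs => rw [h]
    field_simp
  · rw [h]
    field_simp

variable {m : ℕ}

lemma isRealValued_sqTwist {v : Circle → ℂ} (hv : ∀ z : Circle, conj (v z) = -((z : ℂ) ^ m) * v z) :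
    IsRealValued (sqTwist m v) := fun ξ => by
  have hξ : (ξ : ℂ) ^ m ≠ 0 := pow_ne_zero _ ξ.coe_ne_zero
  rw [← Complex.conj_eq_iff_im, sqTwist, map_mul, map_mul, Complex.conj_I, map_pow,
    conj_coe_circle, inv_pow, hv, Circle.coe_pow]
  field_simp
  ring

lemma sqTwist_neg (hm : Odd m) (v : Circle → ℂ) (ξ : Circle) :
    sqTwist m v (-ξ) = -sqTwist m v ξ := by
  simp only [sqTwist, neg_sq, Circle.coe_neg, hm.neg_pow]
  ring

lemma sqTwist_injective : Injective (sqTwist m) := fun v w h => funext fun z => by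
  have hz := congrFun h (circleSqrt z)
  simp only [sqTwist, circleSqrt_sq] at hz
  exact mul_left_cancel₀ (mul_ne_zero I_ne_zero (pow_ne_zero _ (circleSqrt z).coe_ne_zero)) hz

def sqTwistInv (m : ℕ) (u : Circle → ℂ) : Circle → ℂ :=
  fun z => -I * ((circleSqrt z : ℂ) ^ m)⁻¹ * u (circleSqrt z)

lemma sqTwist_sqTwistInv (hm : Odd m) {u : Circle → ℂ} (hu : ∀ z, u (-z) = -u z) :
    sqTwist m (sqTwistInv m u) = u := funext fun ξ => by
  have hξ : (ξ : ℂ) ^ m ≠ 0 := pow_ne_zero _ ξ.coe_ne_zero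
  have hroot : sqTwistInv m u (ξ ^ 2) = -I * ((ξ : ℂ) ^ m)⁻¹ * u ξ := by
    rcases eq_or_eq_neg_of_sq_eq (circleSqrt_sq (ξ ^ 2)) with h | h
    · rw [sqTwistInv, h]
    · simp only [sqTwistInv, h, Circle.coe_neg, hm.neg_pow, hu, inv_neg]
      ring
  rw [sqTwist, hroot]
  field_simp
  linear_combination (-u ξ) * I_sq

lemma conj_sqTwistInv {u : Circle → ℂ} (hu : IsRealValued u) (z : Circle) :
    conj (sqTwistInv m u z) = -((z : ℂ) ^ m) * sqTwistInv m u z := by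
  have hs : (circleSqrt z : ℂ) ^ m ≠ 0 := pow_ne_zero _ (circleSqrt z).coe_ne_zero
  have hz : (z : ℂ) = (circleSqrt z : ℂ) ^ 2 := by rw [← Circle.coe_pow, circleSqrt_sq]
  rw [sqTwistInv, map_mul, map_mul, map_neg, Complex.conj_I, map_inv₀, map_pow, conj_coe_circle,
    inv_pow, inv_inv, Complex.conj_eq_iff_im.2 (hu _), hz]
  field_simp
  ring

end SqTwist

section Regularity

variable {k : ℕ} {α : ℝ} {m : ℕ} {v : Circle → ℂ}

lemma isCkC_sqTwist (hα : 0 < α) (hα1 : α ≤ 1) (hv : IsCkC k α v) : IsCkC k α (sqTwist m v) := by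
  have hper := periodic_liftC (sqTwist m v)
  rw [liftC_sqTwist] at hper
  show IsHolderCk k α (liftC (sqTwist m v))
  rw [liftC_sqTwist]
  exact isHolderCk_twist hv (periodic_liftC v) hα hα1 I m 2 hper

lemma holderNorm_liftC_sqTwist_le (hα : 0 < α) (hα1 : α ≤ 1) (hv : IsCkC k α v) :
    holderNorm k α (liftC (sqTwist m v)) ≤ twistConst k I m 2 * holderNorm k α (liftC v) := by
  have hper := periodic_liftC (sqTwist m v)
  rw [liftC_sqTwist] at hper ⊢
  exact holderNorm_twist_le hv (periodic_liftC v) hα hα1 I m 2 hper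

lemma isCkC_of_isCkC_sqTwist (hα : 0 < α) (hα1 : α ≤ 1) (hv : IsCkC k α (sqTwist m v)) :
    IsCkC k α v := by
  have hper := periodic_liftC v
  rw [liftC_eq_twist_liftC_sqTwist m v] at hper
  show IsHolderCk k α (liftC v)
  rw [liftC_eq_twist_liftC_sqTwist m v]
  exact isHolderCk_twist hv (periodic_liftC _) hα hα1 (-I) (-m / 2) (1 / 2) hper

lemma holderNorm_liftC_le_sqTwist (hα : 0 < α) (hα1 : α ≤ 1) (hv : IsCkC k α (sqTwist m v)) :
    holderNorm k α (liftC v)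
      ≤ twistConst k (-I) (-m / 2) (1 / 2) * holderNorm k α (liftC (sqTwist m v)) := by
  have hper := periodic_liftC v
  rw [liftC_eq_twist_liftC_sqTwist m v] at hper ⊢
  exact holderNorm_twist_le hv (periodic_liftC _) hα hα1 (-I) (-m / 2) (1 / 2) hper

lemma sqTwist_mem_ckOdd (hα : 0 < α) (hα1 : α ≤ 1) (hm : Odd m) (hv : v ∈ Rm k α m) :
    sqTwist m v ∈ CkOdd k α :=
  ⟨isCkC_sqTwist hα hα1 hv.1, isRealValued_sqTwist fun z => (rm_condition_iff hm z _).1 (hv.2 z),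
    fun z => sqTwist_neg hm v z⟩

lemma sqTwistInv_mem_Rm (hα : 0 < α) (hα1 : α ≤ 1) (hm : Odd m) {u : Circle → ℂ}
    (hu : u ∈ CkOdd k α) : sqTwistInv m u ∈ Rm k α m := by
  have hodd : ∀ z, u (-z) = -u z := hu.2.2
  refine ⟨isCkC_of_isCkC_sqTwist (m := m) hα hα1 ?_, fun z => (rm_condition_iff hm z _).2
    (conj_sqTwistInv hu.2.1 z)⟩
  rw [sqTwist_sqTwistInv hm hodd]
  exact hu.1

lemma normCkR_sqTwist_le (hα : 0 < α) (hα1 : α ≤ 1) (hv : IsCkC k α v) :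
    normCkR k α (sqTwist m v) ≤ twistConst k I m 2 * normCkC k α v :=
  (holderNorm_liftC_sqTwist_le hα hα1 hv).trans (mul_le_mul_of_nonneg_left
    (holderNorm_liftC_le_normCkC hv hα hα1) (twistConst_nonneg _ _ _ _))

lemma normCkC_le_normCkR_sqTwist (hα : 0 < α) (hα1 : α ≤ 1) (hv : IsCkC k α v) :
    normCkC k α v ≤ 2 * twistConst k (-I) (-m / 2) (1 / 2) * normCkR k α (sqTwist m v) := by
  rw [mul_assoc]
  exact (normCkC_le_two_mul_holderNorm_liftC hv hα hα1).trans (mul_le_mul_of_nonneg_left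
    (holderNorm_liftC_le_sqTwist hα hα1 (isCkC_sqTwist hα hα1 hv)) two_pos.le)

end Regularity

end HolderCircle

open HolderCircle

/-- For odd `m`, the map `v(ζ) ↦ i ζ^m v(ζ²)` sends `R_m` isomorphically
onto the space `C^{k,α}_o` of odd real-valued `C^{k,α}` functions on `bΔ`. -/
theorem stmt_3 (k : ℕ) (α : ℝ) (hα : 0 < α) (hα' : α < 1) (m : ℕ) (hm : Odd m) :
    let σ : (Circle → ℂ) → (Circle → ℂ) := fun v => fun ξ => Complex.I * (ξ : ℂ) ^ m * v (ξ ^ 2)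
    Set.BijOn σ (Rm k α (m : ℤ)) (CkOdd k α) ∧
    (∀ v w : Circle → ℂ, σ (v + w) = σ v + σ w) ∧
    (∀ (c : ℝ) (v : Circle → ℂ), σ (c • v) = c • σ v) ∧
    ∃ C > 0, ∀ v ∈ Rm k α (m : ℤ),
      normCkR k α (σ v) ≤ C * normCkC k α v ∧ normCkC k α v ≤ C * normCkR k α (σ v) := by
  intro σ
  rw [show σ = sqTwist m from rfl]
  have hα1 := hα'.le
  set C₁ := twistConst k I m 2
  set C₂ := 2 * twistConst k (-I) (-m / 2) (1 / 2)
  have hC₁ : 0 ≤ C₁ := twistConst_nonneg _ _ _ _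
  have hC₂ : 0 ≤ C₂ := mul_nonneg two_pos.le (twistConst_nonneg _ _ _ _)
  refine ⟨⟨fun v hv => sqTwist_mem_ckOdd hα hα1 hm hv, sqTwist_injective.injOn,
    fun u hu => ⟨sqTwistInv m u, sqTwistInv_mem_Rm hα hα1 hm hu, sqTwist_sqTwistInv hm hu.2.2⟩⟩,
    sqTwist_add m, sqTwist_smul m, C₁ + C₂ + 1, by positivity, fun v hv => ⟨?_, ?_⟩⟩
  · exact (normCkR_sqTwist_le hα hα1 hv.1).trans
      (mul_le_mul_of_nonneg_right (by linarith) (normCkC_nonneg k α v))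
  · exact (normCkC_le_normCkR_sqTwist hα hα1 hv.1).trans
      (mul_le_mul_of_nonneg_right (by linarith) (holderNorm_nonneg k α _))
end
end

section
/- Let k be a nonnegative integer, 0 < α < 1, and l ≥ 0 an integer. If f ∈ A^{k,α} satisfies f(ζ) ± ζ^l conj(f(ζ)) = 0 for all ζ ∈ bΔ, then f is a polynomial f(ζ) = Σ_{k=0}^{l} a_k ζ^k of degree at most l whose coefficients satisfy a_k = ∓ conj(a_{l-k}) for k = 0, …, l (with the sign matching the equation: a_k = -conj(a_{l-k}) for the '+' equation and a_k = conj(a_{l-k}) for the '-' equation). -/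
noncomputable section

open Complex Metric Set Finset
open scoped Classical

/-! On the unit circle `conj ζ = ζ⁻¹`, so the boundary relation `g = c ζ^l conj g` turns the
moments `μ_m = ∫ ζ^m g(ζ) dθ` into `μ_m = c conj μ_{-(m+l)}`. By Cauchy's theorem `μ_m = 0` for
`m ≥ 1`, while `μ_{-n} = 2π a_n` for the Taylor coefficients `a_n` of `g` at `0`. Hence `a_n = 0`
for `n > l` and `a_j = c conj a_{l-j}`: the Taylor series of `g` is a polynomial, which agrees with
`g` on the open disc and, by continuity, on the closed disc. -/

open scoped ComplexConjugate Real Nat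

section CircleMoment

variable {g : ℂ → ℂ}

def circleMoment (g : ℂ → ℂ) (m : ℤ) : ℂ :=
  ∫ θ in (0 : ℝ)..2 * π, circleMap 0 1 θ ^ m * g (circleMap 0 1 θ)

def taylorCoeff (g : ℂ → ℂ) (n : ℕ) : ℂ := (n ! : ℂ)⁻¹ * iteratedDeriv n g 0

theorem circleIntegral_zpow_mul_eq_circleMoment (g : ℂ → ℂ) (m : ℤ) :
    (∮ z in C(0, 1), z ^ m * g z) = I * circleMoment g (m + 1) := by
  rw [circleMoment, ← intervalIntegral.integral_const_mul]
  refine intervalIntegral.integral_congr fun θ _ => ?_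
  simp only [deriv_circleMap, smul_eq_mul,
    zpow_add_one₀ (circleMap_ne_center (c := 0) one_ne_zero)]
  ring

theorem circleMoment_eq_zero_of_pos (hg : DiffContOnCl ℂ g (ball 0 1)) {m : ℤ} (hm : 1 ≤ m) :
    circleMoment g m = 0 := by
  obtain ⟨n, rfl⟩ : ∃ n : ℕ, m = n + 1 := ⟨(m - 1).toNat, by omega⟩
  have hcauchy : (∮ z in C(0, 1), z ^ (n : ℤ) * g z) = 0 := by
    simpa only [zpow_natCast, smul_eq_mul] using
      ((differentiable_pow n).diffContOnCl.smul hg).circleIntegral_eq_zero zero_le_one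
  rw [circleIntegral_zpow_mul_eq_circleMoment] at hcauchy
  exact (mul_eq_zero.1 hcauchy).resolve_left I_ne_zero

theorem circleMoment_neg_natCast (hg : DiffContOnCl ℂ g (ball 0 1)) (n : ℕ) :
    circleMoment g (-n) = 2 * π * taylorCoeff g n := by
  have hcauchy := hg.circleIntegral_one_div_sub_center_pow_smul one_pos n
  have hzpow : ∀ z : ℂ, (1 / (z - 0) ^ (n + 1)) • g z = z ^ (-(n : ℤ) - 1) * g z := fun z => by
    rw [sub_zero, smul_eq_mul, one_div, ← zpow_natCast, ← zpow_neg, Nat.cast_succ, neg_add']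
  simp only [hzpow, circleIntegral_zpow_mul_eq_circleMoment, sub_add_cancel] at hcauchy
  refine mul_left_cancel₀ I_ne_zero (hcauchy.trans ?_)
  rw [taylorCoeff, smul_eq_mul]
  ring

theorem circleMoment_eq_mul_conj {c : ℂ} {l : ℕ}
    (hg : ∀ z ∈ sphere (0 : ℂ) 1, g z = c * z ^ l * conj (g z)) (m : ℤ) :
    circleMoment g m = c * conj (circleMoment g (-(m + l))) := by
  rw [circleMoment, circleMoment, ← intervalIntegral.intervalIntegral_conj,
    ← intervalIntegral.integral_const_mul]
  refine intervalIntegral.integral_congr fun θ _ => ?_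
  set z := circleMap 0 1 θ
  have hz : ‖z‖ = 1 := by simp [z]
  have hz0 : z ≠ 0 := circleMap_ne_center one_ne_zero
  conv_lhs => rw [hg z (mem_sphere_zero_iff_norm.2 hz)]
  rw [map_mul, map_zpow₀, ← inv_eq_conj hz, inv_zpow', neg_neg, zpow_add₀ hz0, zpow_natCast]
  ring

end CircleMoment

section BoundaryRelation

variable {g : ℂ → ℂ} {c : ℂ} {l : ℕ} (hg : DiffContOnCl ℂ g (ball 0 1))
  (hbd : ∀ z ∈ sphere (0 : ℂ) 1, g z = c * z ^ l * conj (g z))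
include hg hbd

theorem taylorCoeff_eq_zero_of_lt {n : ℕ} (hn : l < n) : taylorCoeff g n = 0 := by
  have h := circleMoment_eq_mul_conj hbd (-n)
  rw [circleMoment_eq_zero_of_pos hg (m := -(-n + l)) (by omega), map_zero, mul_zero,
    circleMoment_neg_natCast hg] at h
  simpa [Real.pi_ne_zero] using h

theorem taylorCoeff_eq_mul_conj {j : ℕ} (hj : j ≤ l) :
    taylorCoeff g j = c * conj (taylorCoeff g (l - j)) := by
  have h := circleMoment_eq_mul_conj hbd (-j)
  rw [show -(-(j : ℤ) + l) = -((l - j : ℕ) : ℤ) by omega, circleMoment_neg_natCast hg,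
    circleMoment_neg_natCast hg] at h
  simp only [map_mul, map_ofNat, conj_ofReal] at h
  have h2π : (2 * π : ℂ) ≠ 0 := by simp [Real.pi_ne_zero]
  exact mul_left_cancel₀ h2π (h.trans (by ring))

end BoundaryRelation

theorem eqOn_closedBall_sum_taylorCoeff {g : ℂ → ℂ} {l : ℕ} (hg : DiffContOnCl ℂ g (ball 0 1))
    (hvan : ∀ n, l < n → taylorCoeff g n = 0) :
    EqOn g (fun w => ∑ j ∈ range (l + 1), taylorCoeff g j * w ^ j) (closedBall 0 1) := by
  have hball : EqOn g (fun w => ∑ j ∈ range (l + 1), taylorCoeff g j * w ^ j) (ball 0 1) :=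
    fun w hw => by
      have hsum : HasSum (fun n => taylorCoeff g n * w ^ n) (g w) := by
        simpa only [taylorCoeff, sub_zero, smul_eq_mul, mul_comm, mul_left_comm] using
          Complex.hasSum_taylorSeries_on_ball hg.differentiableOn hw
      exact hsum.unique <| hasSum_sum_of_ne_finset_zero fun n hn => by
        simp [hvan n (by simpa using hn)]
  rw [← closure_ball (0 : ℂ) one_ne_zero]
  exact hball.of_subset_closure hg.continuousOn (by fun_prop) subset_closure subset_rfl

theorem extD_coe (f : ClosedDisc → ℂ) (z : ClosedDisc) : extD f z = f z := by
  simp [extD, z.2]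

theorem stmt_5_general (k : ℕ) (α : ℝ) (l : ℕ)
    (ε : ℂ) (f : ClosedDisc → ℂ) (hf : IsA k α f)
    (heq : ∀ z : Circle, f (bd z) + ε * (z : ℂ) ^ l * (starRingEnd ℂ) (f (bd z)) = 0) :
    ∃ a : ℕ → ℂ,
      (∀ z : ClosedDisc, f z = ∑ j ∈ Finset.range (l + 1), a j * (z : ℂ) ^ j) ∧
      ∀ j ≤ l, a j = -ε * (starRingEnd ℂ) (a (l - j)) := by
  obtain ⟨hc, hd, -⟩ := hf
  have hg : DiffContOnCl ℂ (extD f) (ball 0 1) := .mk_ball hd hc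
  have hbd : ∀ z ∈ sphere (0 : ℂ) 1, extD f z = -ε * z ^ l * conj (extD f z) := fun z hz => by
    have hz' : extD f z = f (bd ⟨z, hz⟩) := extD_coe f (bd ⟨z, hz⟩)
    rw [hz']
    linear_combination heq ⟨z, hz⟩
  refine ⟨taylorCoeff (extD f), fun z => ?_, fun j hj => taylorCoeff_eq_mul_conj hg hbd hj⟩
  rw [← extD_coe f z]
  exact eqOn_closedBall_sum_taylorCoeff hg (fun n hn => taylorCoeff_eq_zero_of_lt hg hbd hn) z.2

/-- If `f ∈ A^{k,α}` satisfies `f(ζ) ± ζ^l conj (f ζ) = 0` on `bΔ`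
(`l ≥ 0`), then `f` is a polynomial `Σ_{j=0}^{l} a_j ζ^j` of degree at most `l` with
coefficients satisfying `a_j = ∓ conj (a_{l-j})`. -/
theorem stmt_5 (k : ℕ) (α : ℝ) (hα : 0 < α) (hα' : α < 1) (l : ℕ)
    (ε : ℂ) (hε : ε = 1 ∨ ε = -1) (f : ClosedDisc → ℂ) (hf : IsA k α f)
    (heq : ∀ z : Circle, f (bd z) + ε * (z : ℂ) ^ l * (starRingEnd ℂ) (f (bd z)) = 0) :
    ∃ a : ℕ → ℂ,
      (∀ z : ClosedDisc, f z = ∑ j ∈ Finset.range (l + 1), a j * (z : ℂ) ^ j) ∧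
      ∀ j ≤ l, a j = -ε * (starRingEnd ℂ) (a (l - j)) :=
  stmt_5_general k α l ε f hf heq
end
end
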